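/- arXiv:math/0507496 — 4 statements merged into one kernel-verified Lean document; each statement's English description precedes it below -/
import Mathlib

section
/- Let ℓ be a separably closed field of characteristic p > 0, let q be a power of p, and let τ: ℓ → ℓ denote the q-power Frobenius map. For any invertible n × n matrix A over ℓ, there exists an invertible n × n matrix U over ℓ such that U⁻¹ · A · U^τ equals the identity matrix, where U^τ denotes entrywise application of τ. -/
/-!
Let `φ v = A * v^τ`, a `τ`-semilinear map of `ℓⁿ`. A matrix `U` works exactly when its columns
form a basis of `φ`-fixed vectors, so it suffices that the fixed vectors span `ℓⁿ`. Let `W` be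
their span. Since `A` is invertible and the Frobenius preserves linear independence, `φ` induces
an injective semilinear map of `ℓⁿ ⧸ W`. An injective `q`-semilinear map of a nonzero space has a
nonzero fixed vector: along the first linear relation `φ^(k+1) w = ∑ aᵢ φ^i w` among the iterates
of some `w ≠ 0`, the fixed vectors `∑ dᵢ φ^i w` correspond to the roots of a separable additive
polynomial, which has nonzero roots over a separably closed field. A fixed vector of the quotient
lifts to a fixed vector of `φ` because `v ↦ v - φ v` maps `W` onto itself (Artin–Schreier), so
`W` is everything.
-/

open Polynomial Finset Submodule

section

variable {K : Type*} [Field K]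

theorem exists_sub_pow_eq [IsSepClosed K] {q : ℕ} (hq : 1 < q) (hqK : (q : K) = 0) (z : K) :
    ∃ x, x - x ^ q = z := by
  obtain ⟨x, hx⟩ :=
    IsSepClosed.exists_root_C_mul_X_pow_add_C_mul_X_add_C 1 (-1) z hqK hq (by norm_num)
  exact ⟨x, by linear_combination -hx⟩

theorem exists_ne_zero_isRoot_of_separable [IsSepClosed K] {P : K[X]} (hP : P.Separable)
    (hdeg : 2 ≤ P.natDegree) : ∃ t ≠ 0, P.IsRoot t := by
  classical
  have hcard : P.roots.toFinset.card = P.natDegree := by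
    rw [Multiset.toFinset_card_of_nodup (nodup_roots hP),
      splits_iff_card_roots.mp (IsSepClosed.splits_of_separable P hP)]
  obtain ⟨t, ht, ht0⟩ := Finset.exists_mem_ne (by omega : 1 < P.roots.toFinset.card) 0
  exact ⟨t, ht0, isRoot_of_mem_roots (Multiset.mem_toFinset.mp ht)⟩

noncomputable def frobeniusRecPoly (q : ℕ) (a : ℕ → K) : ℕ → K[X]
  | 0 => C (a 0) * X ^ q
  | i + 1 => frobeniusRecPoly q a i ^ q + C (a (i + 1)) * X ^ q

section frobeniusRecPoly

variable {q : ℕ} {a : ℕ → K}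

theorem derivative_frobeniusRecPoly (hqK : (q : K) = 0) (i : ℕ) :
    derivative (frobeniusRecPoly q a i) = 0 := by
  induction i with
  | zero => rw [frobeniusRecPoly, derivative_C_mul_X_pow, hqK, mul_zero, map_zero, zero_mul]
  | succ i ih => simp [frobeniusRecPoly, hqK, derivative_pow, ih]

theorem X_pow_dvd_frobeniusRecPoly (hq : q ≠ 0) (i : ℕ) : X ^ q ∣ frobeniusRecPoly q a i := by
  induction i with
  | zero => exact dvd_mul_left _ _
  | succ i ih => exact dvd_add (ih.trans (dvd_pow_self _ hq)) (dvd_mul_left _ _)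

theorem coeff_frobeniusRecPoly (hq : 1 < q) (i : ℕ) : (frobeniusRecPoly q a i).coeff q = a i := by
  cases i with
  | zero => simp [frobeniusRecPoly]
  | succ i =>
    have hdvd : X ^ (q * q) ∣ frobeniusRecPoly q a i ^ q := by
      rw [pow_mul]
      exact pow_dvd_pow_of_dvd (X_pow_dvd_frobeniusRecPoly (by omega) i) q
    rw [frobeniusRecPoly, coeff_add, X_pow_dvd_iff.mp hdvd q (by nlinarith), coeff_C_mul_X_pow,
      if_pos rfl, zero_add]

theorem frobeniusRecPoly_ne_zero (hq : 1 < q) {j k : ℕ} (hjk : j ≤ k) (ha : a j ≠ 0) :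
    frobeniusRecPoly q a k ≠ 0 := by
  intro h
  induction k with
  | zero =>
    rw [Nat.le_zero.mp hjk] at ha
    exact ha (by rw [← coeff_frobeniusRecPoly (a := a) hq, h, coeff_zero])
  | succ k ih =>
    have hk : a (k + 1) = 0 := by rw [← coeff_frobeniusRecPoly (a := a) hq, h, coeff_zero]
    rcases hjk.lt_or_eq with hjk | rfl
    · refine ih (by omega) (pow_eq_zero_iff (n := q) (by omega) |>.mp ?_)
      simpa [frobeniusRecPoly, hk] using h
    · exact ha hk

theorem exists_ne_zero_eval_frobeniusRecPoly_eq_self [IsSepClosed K] (hq : 1 < q)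
    (hqK : (q : K) = 0) {j k : ℕ} (hjk : j ≤ k) (ha : a j ≠ 0) :
    ∃ t ≠ 0, (frobeniusRecPoly q a k).eval t = t := by
  set P := frobeniusRecPoly q a k
  have hdeg : q ≤ P.natDegree := by
    simpa using natDegree_le_of_dvd (X_pow_dvd_frobeniusRecPoly (by omega) k)
      (frobeniusRecPoly_ne_zero hq hjk ha)
  have hsep : (P - X).Separable := by
    rw [separable_def, derivative_sub, derivative_frobeniusRecPoly hqK, derivative_X, zero_sub]
    exact isCoprime_one_right.neg_right
  obtain ⟨t, ht0, ht⟩ := exists_ne_zero_isRoot_of_separable hsep (by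
    rw [natDegree_sub_eq_left_of_natDegree_lt (by rw [natDegree_X]; omega)]; omega)
  exact ⟨t, ht0, by simpa [sub_eq_zero] using ht⟩

end frobeniusRecPoly

variable (K) in
theorem exists_linearIndepOn_range_mem_span {V : Type*} [AddCommGroup V] [Module K V]
    [FiniteDimensional K V] (g : ℕ → V) :
    ∃ m, LinearIndepOn K g (range m) ∧ g m ∈ span K (g '' range m) := by
  classical
  have indep : ∀ m, (∀ j < m, g j ∉ span K (g '' range j)) → LinearIndepOn K g (range m) := by
    intro m
    induction m with
    | zero => simp
    | succ m ih =>
      intro h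
      rw [range_add_one, coe_insert, linearIndepOn_insert (by simp)]
      exact ⟨ih fun j hj => h j (by omega), h m (by omega)⟩
  have hex : ∃ m, g m ∈ span K (g '' range m) := by
    by_contra! h
    have hg : LinearIndependent K g := by
      refine linearIndependent_iff_finset_linearIndependent.mpr fun s => ?_
      exact (indep (s.sup id + 1) fun j _ => h j).mono fun i hi =>
        mem_range.mpr (Nat.lt_succ_of_le (le_sup (f := id) hi))
    have := hg.finite
    exact not_finite ℕ
  exact ⟨Nat.find hex, indep _ fun j hj => Nat.find_min hex hj, Nat.find_spec hex⟩

section Semilinear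

variable {V : Type*} [AddCommGroup V] [Module K V] {σ : K →+* K} (φ : V →ₛₗ[σ] V)

def fixedSpan : Submodule K V := span K {v | φ v = v}

theorem fixedSpan_le_comap : fixedSpan φ ≤ (fixedSpan φ).comap φ :=
  span_le.mpr fun v (hv : φ v = v) => by
    rw [SetLike.mem_coe, mem_comap, hv]
    exact subset_span hv

theorem exists_mem_fixedSpan_sub_apply_eq (hσ : ∀ z, ∃ x, x - σ x = z) {u : V}
    (hu : u ∈ fixedSpan φ) : ∃ u' ∈ fixedSpan φ, u' - φ u' = u := by
  -- `u' ↦ u' - φ u'` is only additive, so induct on the claim for all multiples of `u` at once.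
  suffices ∀ c : K, ∃ u' ∈ fixedSpan φ, u' - φ u' = c • u by simpa using this 1
  induction hu using Submodule.span_induction with
  | mem v hv =>
    intro c
    obtain ⟨x, hx⟩ := hσ c
    refine ⟨x • v, smul_mem _ _ (subset_span hv), ?_⟩
    rw [map_smulₛₗ, (hv : φ v = v), ← sub_smul, hx]
  | zero => exact fun c => ⟨0, zero_mem _, by simp⟩
  | add v w _ _ hv hw =>
    intro c
    obtain ⟨v', hv', hv'c⟩ := hv c
    obtain ⟨w', hw', hw'c⟩ := hw c
    exact ⟨v' + w', add_mem hv' hw', by rw [map_add, smul_add, ← hv'c, ← hw'c]; abel⟩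
  | smul b v _ hv => exact fun c => by simpa [smul_smul] using hv (c * b)

theorem mem_fixedSpan_of_apply_mem
    (hφ : ∀ s : Set V, LinearIndepOn K id s → LinearIndepOn K φ s) {x : V}
    (hx : φ x ∈ fixedSpan φ) : x ∈ fixedSpan φ := by
  obtain ⟨b, hb, hspan, hind⟩ := exists_linearIndependent K {v | φ v = v}
  by_contra hxW
  have hxb : x ∉ b := fun h => hxW (subset_span (hb h))
  have hφb : φ '' b = b := (Set.image_congr fun v hv => hb hv).trans (Set.image_id' b)
  have := (linearIndepOn_insert hxb).mp
    (hφ _ ((linearIndepOn_id_insert hxb).mpr ⟨hind, hspan ▸ hxW⟩))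
  rw [hφb, hspan] at this
  exact this.2 hx

theorem apply_sum_smul_eq_self_of_recurrence {g : ℕ → V} (hg : ∀ i, g (i + 1) = φ (g i))
    {a d : ℕ → K} {k : ℕ} (hrel : ∑ i ∈ range (k + 1), a i • g i = g (k + 1))
    (hd0 : d 0 = a 0 * σ (d k)) (hd : ∀ i, d (i + 1) = σ (d i) + a (i + 1) * σ (d k)) :
    φ (∑ i ∈ range (k + 1), d i • g i) = ∑ i ∈ range (k + 1), d i • g i := by
  calc φ (∑ i ∈ range (k + 1), d i • g i)
      = ∑ i ∈ range k, σ (d i) • g (i + 1) + σ (d k) • g (k + 1) := by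
        rw [map_sum, sum_range_succ]
        simp only [map_smulₛₗ, hg]
    _ = ∑ i ∈ range k, (σ (d i) + a (i + 1) * σ (d k)) • g (i + 1)
          + (a 0 * σ (d k)) • g 0 := by
        rw [← hrel, sum_range_succ', smul_add, smul_sum]
        simp only [add_smul, sum_add_distrib, smul_smul, mul_comm]
        abel
    _ = ∑ i ∈ range (k + 1), d i • g i := by
        rw [sum_range_succ' _ k, hd0]
        simp only [hd]

theorem exists_ne_zero_apply_eq_self [IsSepClosed K] [FiniteDimensional K V] [Nontrivial V]
    {q : ℕ} (hσ : ∀ x, σ x = x ^ q) (hq : 1 < q) (hqK : (q : K) = 0)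
    (hφ : Function.Injective φ) : ∃ v ≠ 0, φ v = v := by
  obtain ⟨w, hw⟩ := exists_ne (0 : V)
  set g : ℕ → V := fun i => φ^[i] w
  have hg : ∀ i, g (i + 1) = φ (g i) := fun i => Function.iterate_succ_apply' φ i w
  have hg0 : ∀ i, g i ≠ 0 := by
    intro i
    induction i with
    | zero => exact hw
    | succ i ih => rw [hg]; exact (map_ne_zero_iff φ hφ).mpr ih
  obtain ⟨m, hind, hspan⟩ := exists_linearIndepOn_range_mem_span K g
  obtain ⟨a, ha⟩ := (mem_span_image_finset_iff_exists_fun' K).mp hspan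
  obtain ⟨j, hj, haj⟩ : ∃ j ∈ range m, a j ≠ 0 := by
    by_contra! h
    exact hg0 m (by rw [← ha, sum_eq_zero fun i hi => by rw [h i hi, zero_smul]])
  obtain ⟨k, rfl⟩ : ∃ k, m = k + 1 := Nat.exists_eq_succ_of_ne_zero (by rintro rfl; simp at hj)
  obtain ⟨t, ht0, ht⟩ := exists_ne_zero_eval_frobeniusRecPoly_eq_self hq hqK
    (Nat.lt_succ_iff.mp (mem_range.mp hj)) haj
  -- `∑ dᵢ φ^i w` is fixed once `dᵢ = Pᵢ(t)` with `Pᵢ = frobeniusRecPoly q a i` and `P_k(t) = t`.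
  set d : ℕ → K := fun i => (frobeniusRecPoly q a i).eval t
  refine ⟨∑ i ∈ range (k + 1), d i • g i, fun h0 => ht0 ?_,
    apply_sum_smul_eq_self_of_recurrence φ hg ha ?_ ?_⟩
  · rw [← ht]
    exact linearIndepOn_finset_iff.mp hind d h0 k (self_mem_range_succ k)
  · simp only [d, frobeniusRecPoly, eval_mul, eval_C, eval_pow, eval_X, ht, hσ]
  · intro i
    simp only [d, frobeniusRecPoly, eval_add, eval_mul, eval_C, eval_pow, eval_X, ht, hσ]

theorem fixedSpan_eq_top [IsSepClosed K] [FiniteDimensional K V] {q : ℕ}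
    (hσ : ∀ x, σ x = x ^ q) (hq : 1 < q) (hqK : (q : K) = 0)
    (hφ : ∀ s : Set V, LinearIndepOn K id s → LinearIndepOn K φ s) : fixedSpan φ = ⊤ := by
  set W := fixedSpan φ
  by_contra hW
  have : Nontrivial (V ⧸ W) := Submodule.Quotient.nontrivial_iff.mpr hW
  set ψ := W.mapQ W φ (fixedSpan_le_comap φ)
  have hψ : Function.Injective ψ := by
    refine (injective_iff_map_eq_zero ψ).mpr fun x hx => ?_
    induction x using Submodule.Quotient.induction_on with
    | H v =>
      rw [mapQ_apply, Quotient.mk_eq_zero] at hx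
      exact (Quotient.mk_eq_zero W).mpr (mem_fixedSpan_of_apply_mem φ hφ hx)
  obtain ⟨x, hx0, hx⟩ := exists_ne_zero_apply_eq_self ψ hσ hq hqK hψ
  obtain ⟨v, rfl⟩ := W.mkQ_surjective x
  have hvW : φ v - v ∈ W := (Submodule.Quotient.eq W).mp hx
  obtain ⟨u, huW, hu⟩ := exists_mem_fixedSpan_sub_apply_eq φ
    (fun z => by simpa [hσ] using exists_sub_pow_eq hq hqK z) hvW
  have hfix : φ (v + u) = v + u := by
    rw [map_add]
    linear_combination (norm := abel) -hu
  exact hx0 ((Quotient.mk_eq_zero W).mpr ((W.add_mem_iff_left huW).mp (subset_span hfix)))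

end Semilinear

theorem LinearIndependent.map_ringHom {L ι n : Type*} [Field L] [Finite n] (σ : K →+* L)
    {v : ι → n → K} (hv : LinearIndependent K v) : LinearIndependent L (fun i => σ ∘ v i) := by
  -- `σ` is an isomorphism onto its range, followed by a field extension.
  have h := hv.map_of_surjective_injectiveₛ σ.rangeRestrict
    (AddMonoidHom.compLeft σ.rangeRestrict.toAddMonoidHom n) σ.rangeRestrict_surjective
    σ.rangeRestrict.injective.comp_left (fun r m => by ext; simp)
  have hL := (linearIndependent_algebraMap_comp_iff (R := σ.range) (S := L)).mpr h
  exact hL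

namespace Matrix

variable {n : Type*} [Fintype n]

def mulVecSemilinear (σ : K →+* K) (A : Matrix n n K) : (n → K) →ₛₗ[σ] (n → K) where
  toFun v := A *ᵥ (σ ∘ v)
  map_add' v w := by
    rw [← mulVec_add]
    congr 1
    ext
    simp
  map_smul' c v := by
    rw [← mulVec_smul]
    congr 1
    ext
    simp

variable [DecidableEq n]

theorem linearIndepOn_mulVecSemilinear {σ : K →+* K} {A : Matrix n n K} (hA : IsUnit A)
    {s : Set (n → K)} (hs : LinearIndepOn K id s) : LinearIndepOn K (A.mulVecSemilinear σ) s :=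
  (hs.map_ringHom σ).map' A.mulVecLin
    (LinearMap.ker_eq_bot.mpr (mulVec_injective_iff_isUnit.mpr hA))

theorem exists_isUnit_mul_map_eq {σ : K →+* K} {A : Matrix n n K}
    (h : fixedSpan (A.mulVecSemilinear σ) = ⊤) :
    ∃ U : Matrix n n K, IsUnit U ∧ A * U.map σ = U := by
  let b₀ := Module.Basis.ofSpan h.ge
  let b := b₀.reindex (b₀.indexEquiv (Pi.basisFun K n))
  have hb : ∀ j, A.mulVecSemilinear σ (b j) = b j := fun j =>
    Module.Basis.ofSpan_subset h.ge (by rw [Module.Basis.reindex_apply]; exact Set.mem_range_self _)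
  refine ⟨(of b)ᵀ, linearIndependent_cols_iff_isUnit.mp b.linearIndependent, ?_⟩
  ext i j
  simpa [mulVecSemilinear, mul_apply, mulVec, dotProduct] using congrFun (hb j) i

end Matrix

end

/-- Lang's theorem for `GL_n`: over a separably closed field `ℓ` of characteristic
`p > 0`, with `q` a power of `p` and `τ` the `q`-power Frobenius, every invertible
matrix `A` can be written so that `U⁻¹ * A * U^τ = 1` for some invertible `U`. -/
theorem stmt_0 (p : ℕ) [Fact p.Prime] (ℓ : Type*) [Field ℓ] [IsSepClosed ℓ]
    [CharP ℓ p] (f : ℕ) (hf : 0 < f) (q : ℕ) (hq : q = p ^ f)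
    (n : ℕ) (A : Matrix (Fin n) (Fin n) ℓ) (hA : IsUnit A) :
    ∃ U : Matrix (Fin n) (Fin n) ℓ,
      IsUnit U ∧ U⁻¹ * A * U.map (fun x => x ^ q) = 1 := by
  subst hq
  have hq : 1 < p ^ f := Nat.one_lt_pow hf.ne' (Fact.out : p.Prime).one_lt
  have hqK : ((p ^ f : ℕ) : ℓ) = 0 := by
    rw [Nat.cast_pow, CharP.cast_eq_zero, zero_pow hf.ne']
  have hspan := fixedSpan_eq_top (A.mulVecSemilinear (iterateFrobenius ℓ p f))
    (iterateFrobenius_def p f) hq hqK fun _ => Matrix.linearIndepOn_mulVecSemilinear hA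
  obtain ⟨U, hU, hAU⟩ : ∃ U : Matrix (Fin n) (Fin n) ℓ, IsUnit U ∧ A * U.map (· ^ p ^ f) = U :=
    Matrix.exists_isUnit_mul_map_eq hspan
  refine ⟨U, hU, ?_⟩
  rw [Matrix.mul_assoc, hAU, Matrix.nonsing_inv_mul _ ((Matrix.isUnit_iff_isUnit_det U).mp hU)]
end

section
/- Let L be a free ℤ-module of finite rank m, λ: L → ℝ a group homomorphism, and R an integral domain. Define v_λ on the group algebra R[L] by v_λ(Σ c_z · z) = min{λ(z) : c_z ≠ 0}. If λ is irrational, i.e., L ∩ ker(λ) = {0}, then v_λ(x·y) = v_λ(x) + v_λ(y) for all nonzero x, y ∈ R[L]; in particular R[L] is an integral domain. -/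
open scoped Classical

/-- The valuation `v_λ` on the group algebra `R[L]`:
`v_λ(Σ c_z · z) = min {λ(z) : c_z ≠ 0}`, with value `⊤` on `0`. -/
noncomputable def vlam {R L : Type*} [Semiring R] [AddCommGroup L]
    (lam : L →+ ℝ) (x : AddMonoidAlgebra R L) : WithTop ℝ :=
  x.coeff.support.inf fun z => ((lam z : ℝ) : WithTop ℝ)

/-! Since `λ` is injective, the `λ`-minimal monomial of a product is the product of the
`λ`-minimal monomials of the factors, reached in exactly one way; so its coefficient is the
product of the two minimal coefficients, which is nonzero over a domain. -/

theorem uniqueAdd_of_isMinOn {L M : Type*} [AddZeroClass L] [AddCommMonoid M] [LinearOrder M]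
    [IsOrderedCancelAddMonoid M] {lam : L →+ M} (hlam : Function.Injective lam)
    {A B : Finset L} {a b : L} (ha : IsMinOn lam A a) (hb : IsMinOn lam B b) :
    UniqueAdd A B a b := by
  intro p q hp hq hpq
  have hsum : lam p + lam q = lam a + lam b := by rw [← map_add, ← map_add, hpq]
  obtain ⟨hap, hbq⟩ := (add_eq_add_iff_eq_and_eq (ha hp) (hb hq)).mp hsum.symm
  exact ⟨hlam hap.symm, hlam hbq.symm⟩

theorem AddMonoidAlgebra.exists_isMinOn_support {R L M : Type*} [Semiring R] [LinearOrder M]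
    (f : L → M) {x : AddMonoidAlgebra R L} (hx : x ≠ 0) :
    ∃ a ∈ x.coeff.support, IsMinOn f x.coeff.support a := by
  obtain ⟨a, ha, hmin⟩ := x.coeff.support.exists_min_image f
    (Finsupp.support_nonempty_iff.mpr (mt AddMonoidAlgebra.coeff_eq_zero.mp hx))
  exact ⟨a, ha, isMinOn_iff.mpr hmin⟩

section Valuation

open AddMonoidAlgebra

variable {R L : Type*} [Semiring R] [AddCommGroup L] {lam : L →+ ℝ}

theorem vlam_eq_of_isMinOn {x : AddMonoidAlgebra R L} {a : L} (ha : a ∈ x.coeff.support)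
    (hmin : IsMinOn lam x.coeff.support a) : vlam lam x = lam a :=
  inf_eq_of_isMinOn ha (hmin.comp_mono WithTop.coe_mono)

theorem vlam_eq_top_iff {x : AddMonoidAlgebra R L} : vlam lam x = ⊤ ↔ x = 0 := by
  simp [vlam, Finset.inf_eq_top_iff, ← coeff_eq_zero, Finsupp.ext_iff]

theorem vlam_add_vlam_le_vlam_mul (x y : AddMonoidAlgebra R L) :
    vlam lam x + vlam lam y ≤ vlam lam (x * y) :=
  le_infDegree_mul (WithTop.addHom.comp lam).toAddHom x y

theorem vlam_mul [NoZeroDivisors R] (hlam : Function.Injective lam)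
    {x y : AddMonoidAlgebra R L} (hx : x ≠ 0) (hy : y ≠ 0) :
    vlam lam (x * y) = vlam lam x + vlam lam y := by
  obtain ⟨a, ha, hamin⟩ := exists_isMinOn_support lam hx
  obtain ⟨b, hb, hbmin⟩ := exists_isMinOn_support lam hy
  have hab : a + b ∈ (x * y).coeff.support := by
    rw [Finsupp.mem_support_iff, coeff_mul_add_of_uniqueAdd (uniqueAdd_of_isMinOn hlam hamin hbmin)]
    exact mul_ne_zero (Finsupp.mem_support_iff.mp ha) (Finsupp.mem_support_iff.mp hb)
  refine le_antisymm ?_ (vlam_add_vlam_le_vlam_mul x y)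
  calc vlam lam (x * y) ≤ ((lam (a + b) : ℝ) : WithTop ℝ) := Finset.inf_le hab
    _ = vlam lam x + vlam lam y := by
      rw [vlam_eq_of_isMinOn ha hamin, vlam_eq_of_isMinOn hb hbmin, map_add, WithTop.coe_add]

end Valuation

theorem stmt_3_general {R L : Type*} [CommRing R] [IsDomain R] [AddCommGroup L]
    (lam : L →+ ℝ)
    (hlam : Function.Injective lam) :
    (∀ x y : AddMonoidAlgebra R L, x ≠ 0 → y ≠ 0 →
      vlam lam (x * y) = vlam lam x + vlam lam y) ∧
    (∀ x y : AddMonoidAlgebra R L, x * y = 0 → x = 0 ∨ y = 0) := by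
  refine ⟨fun x y hx hy => vlam_mul hlam hx hy, fun x y hxy => ?_⟩
  by_contra! h
  have hprod := vlam_mul hlam h.1 h.2
  rw [hxy, vlam_eq_top_iff.mpr rfl] at hprod
  exact WithTop.add_ne_top.mpr
    ⟨vlam_eq_top_iff.not.mpr h.1, vlam_eq_top_iff.not.mpr h.2⟩ hprod.symm

/-- For `L` a free `ℤ`-module of finite rank, `R` an integral domain, and `λ : L → ℝ`
an irrational (i.e. injective) homomorphism, `v_λ` is multiplicative on nonzero
elements of `R[L]`; in particular `R[L]` is an integral domain. -/
theorem stmt_3 {R L : Type*} [CommRing R] [IsDomain R] [AddCommGroup L]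
    [Module.Free ℤ L] [Module.Finite ℤ L] (lam : L →+ ℝ)
    (hlam : Function.Injective lam) :
    (∀ x y : AddMonoidAlgebra R L, x ≠ 0 → y ≠ 0 →
      vlam lam (x * y) = vlam lam x + vlam lam y) ∧
    (∀ x y : AddMonoidAlgebra R L, x * y = 0 → x = 0 ∨ y = 0) :=
  stmt_3_general lam hlam
end

section
/- Let k be an algebraically closed field of characteristic p > 0 and q a power of p. Let L be a free ℤ-module of finite rank with injective homomorphism λ: L → ℝ, and let E = k((L))_λ be the associated monomial field with valuation v_λ. Suppose x ∈ E cannot be written as a^q − a for any a ∈ E. Then there exists c > 0 such that for every nonnegative integer i and every y ∈ E with x − y + y^q supported on q^i·L, we have v_λ(x − y + y^q) ≤ −c·q^i. -/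
/-- Membership in the monomial field `E = k((L))_λ`, viewed inside the field of
Hahn series over `ℝ`: the support lies in `λ(L)` and, for each `r ∈ ℝ`, only
finitely many support elements are `≤ r`. -/
def InMonomialField {k : Type*} [Field k] {L : Type*} [AddCommGroup L]
    (Λ : L →+ ℝ) (x : HahnSeries ℝ k) : Prop :=
  x.support ⊆ Set.range Λ ∧ ∀ r : ℝ, (x.support ∩ Set.Iic r).Finite

/-!
Write `℘ a = a ^ q - a`, an additive map. Every `w ∈ E` decomposes as `w = N + ℘ b` with `b ∈ E`
and `N` supported on the reduced exponents `λ z < 0`, `z ∉ q L`: the part of `w` with positive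
exponents is `℘ (-∑ₙ w ^ q ^ n)`, the constant term is `℘` of a constant because `k` is
algebraically closed, and a monomial `c {q ^ j • z₀}` is `d {z₀} + ℘ (∑_{i<j} (d {z₀}) ^ q ^ i)`
for `d ^ q ^ j = c`. Each exponent `t` of `N` has some `q ^ j * t` in the support of `w`.
The reduced part is unique: if `℘ u` is supported on reduced exponents then `℘ u = 0`, since
otherwise the lowest exponent `s < 0` of `u` gives the exponent `q * s ∈ λ (q L)` of `℘ u`.

Now `x - y + y ^ q = x + ℘ y` has the same reduced part `N ≠ 0` as `x`. With `m = v N = λ z`,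
`z ∉ q L`, some `q ^ j * m` lies in the support of `x - y + y ^ q ⊆ q ^ i λ(L)`; this forces
`i ≤ j`, so `v (x - y + y ^ q) ≤ q ^ j * m ≤ q ^ i * m`, and `c = -m` works.
-/

open HahnSeries Set

theorem Set.IsPWO.of_finite_inter_Iic {α : Type*} [LinearOrder α] {s : Set α}
    (h : ∀ r, (s ∩ Iic r).Finite) : s.IsPWO :=
  (isWF_iff_no_descending_seq.2 fun g hg hmem => (infinite_of_injective_forall_mem
    (s := s ∩ Iic (g 0)) hg.injective fun n => ⟨hmem n, hg.antitone n.zero_le⟩) (h (g 0))).isPWO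

section ArtinSchreier

variable (R : Type*) [CommRing R] (p : ℕ) [ExpChar R p] (f : ℕ)

def artinSchreier : R →+ R :=
  (iterateFrobenius R p f).toAddMonoidHom - AddMonoidHom.id R

variable {R p f}

theorem artinSchreier_apply (a : R) : artinSchreier R p f a = a ^ p ^ f - a := by
  simp [artinSchreier, iterateFrobenius_def]

theorem pow_pow_sub_self_eq_artinSchreier_sum (a : R) (j : ℕ) :
    a ^ (p ^ f) ^ j - a = artinSchreier R p f (∑ i ∈ Finset.range j, a ^ (p ^ f) ^ i) := by
  rw [map_sum]
  calc a ^ (p ^ f) ^ j - a = ∑ i ∈ Finset.range j, (a ^ (p ^ f) ^ (i + 1) - a ^ (p ^ f) ^ i) := by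
        rw [Finset.sum_range_sub (fun i => a ^ (p ^ f) ^ i), pow_zero, pow_one]
    _ = _ := Finset.sum_congr rfl fun i _ => by rw [artinSchreier_apply, pow_succ, pow_mul]

theorem IsAlgClosed.exists_artinSchreier_eq {k : Type*} [Field k] [IsAlgClosed k] [ExpChar k p]
    (hq : 1 < p ^ f) (c : k) : ∃ d, artinSchreier k p f d = c := by
  have hdeg : (Polynomial.X ^ p ^ f - Polynomial.X : Polynomial k).natDegree = p ^ f := by
    rw [Polynomial.natDegree_sub_eq_left_of_natDegree_lt] <;>
      simp [hq]
  obtain ⟨d, hd⟩ := IsAlgClosed.eval_surjective (hdeg ▸ (zero_lt_one.trans hq).ne') c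
  exact ⟨d, by simpa [artinSchreier_apply] using hd⟩

end ArtinSchreier

namespace HahnSeries

variable {Γ R : Type*}

theorem sum_single_coeff_of_support_finite [PartialOrder Γ] [AddCommMonoid R]
    {x : HahnSeries Γ R} (hx : x.support.Finite) :
    ∑ s ∈ hx.toFinset, single s (x.coeff s) = x := by
  classical
  ext t
  simp only [coeff_sum, coeff_single, Finset.sum_ite_eq, Finite.mem_toFinset, mem_support]
  split_ifs with h
  · rfl
  · exact (not_not.1 h).symm

variable {k : Type*} [Field k] {p : ℕ} [ExpChar k p] (f : ℕ)

instance : ExpChar (HahnSeries ℝ k) p := expChar_of_injective_ringHom C_injective p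

theorem coeff_single_pow_expChar_pow (s g : ℝ) (c : k) :
    (single s c ^ p ^ f).coeff g = (single s c).coeff (g / (p ^ f : ℕ)) ^ p ^ f := by
  have hq : ((p ^ f : ℕ) : ℝ) ≠ 0 := by exact_mod_cast (expChar_pow_pos k p f).ne'
  rw [single_pow, coeff_single, coeff_single, nsmul_eq_mul, div_eq_iff hq, mul_comm s]
  split_ifs <;> simp [expChar_ne_zero k p]

theorem coeff_pow_expChar_pow_of_support_finite {x : HahnSeries ℝ k} (hx : x.support.Finite)
    (g : ℝ) : (x ^ p ^ f).coeff g = x.coeff (g / (p ^ f : ℕ)) ^ p ^ f := by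
  rw [← sum_single_coeff_of_support_finite hx, sum_pow_char_pow, coeff_sum, coeff_sum,
    sum_pow_char_pow]
  exact Finset.sum_congr rfl fun s _ => coeff_single_pow_expChar_pow f s g _

theorem coeff_pow_expChar_pow {x : HahnSeries ℝ k} (hx : ∀ r, (x.support ∩ Iic r).Finite)
    (g : ℝ) : (x ^ p ^ f).coeff g = x.coeff (g / (p ^ f : ℕ)) ^ p ^ f := by
  -- Cutting `x` off at `b` changes neither side and leaves a finite sum of monomials.
  have hq : (1 : ℝ) ≤ (p ^ f : ℕ) := by exact_mod_cast expChar_pow_pos k p f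
  obtain ⟨b, hb⟩ := exists_gt (max (max g (g / (p ^ f : ℕ))) 0)
  simp only [max_lt_iff] at hb
  obtain ⟨⟨hgb, hgqb⟩, hb0⟩ := hb
  set x₂ := x - truncLT b x
  have hx₂ : (x₂ ^ p ^ f).coeff g = 0 := by
    obtain h | h := eq_or_ne x₂ 0
    · simp [h, expChar_ne_zero k p]
    have hbord : b ≤ x₂.order := by
      by_contra! hlt
      exact coeff_order_eq_zero.not.2 h (by simp [x₂, coeff_truncLT_of_lt hlt])
    refine coeff_eq_zero_of_lt_order ?_
    rw [order_pow, nsmul_eq_mul]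
    nlinarith
  have hfin : (truncLT b x).support.Finite :=
    (hx b).subset <| by rw [support_truncLT]; exact fun t ht => ⟨ht.1, le_of_lt ht.2⟩
  calc (x ^ p ^ f).coeff g = ((truncLT b x + x₂) ^ p ^ f).coeff g := by rw [add_sub_cancel]
    _ = (truncLT b x ^ p ^ f).coeff g := by rw [add_pow_expChar_pow, coeff_add, hx₂, add_zero]
    _ = _ := by rw [coeff_pow_expChar_pow_of_support_finite f hfin, coeff_truncLT_of_lt hgqb]

theorem mem_support_pow_expChar_pow {x : HahnSeries ℝ k} (hx : ∀ r, (x.support ∩ Iic r).Finite)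
    {t : ℝ} : t ∈ (x ^ p ^ f).support ↔ t / (p ^ f : ℕ) ∈ x.support := by
  rw [mem_support, mem_support, coeff_pow_expChar_pow f hx]
  exact pow_ne_zero_iff (expChar_pow_pos k p f).ne'

end HahnSeries

section Lattice

variable {L : Type*} [AddCommGroup L] {q : ℕ}

theorem exists_forall_pow_smul_ne [Module.Free ℤ L] (hq : 1 < q) {z : L} (hz : z ≠ 0) :
    ∃ j : ℕ, ∀ z' : L, q ^ j • z' ≠ z := by
  let b := Module.Free.chooseBasis ℤ L
  obtain ⟨i, hi⟩ : ∃ i, b.repr z i ≠ 0 := by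
    by_contra! h
    exact hz (b.repr.map_eq_zero_iff.1 (Finsupp.ext h))
  refine ⟨(b.repr z i).natAbs, fun z' hz' => ?_⟩
  have hdvd : ∀ (n : ℕ) (z' : L), q ^ n • z' = z → q ^ n ∣ (b.repr z i).natAbs := by
    rintro n z' rfl
    rw [map_nsmul, Finsupp.smul_apply, nsmul_eq_mul, Int.natAbs_mul, Int.natAbs_natCast]
    exact Dvd.intro _ rfl
  exact (Nat.le_of_dvd (Int.natAbs_pos.2 hi) (hdvd _ z' hz')).not_gt (Nat.lt_pow_self hq)

theorem exists_eq_pow_smul_of_ne_zero [Module.Free ℤ L] (hq : 1 < q) {z : L}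
    (hz : z ≠ 0) : ∃ (j : ℕ) (z₀ : L), z = q ^ j • z₀ ∧ ∀ z' : L, q • z' ≠ z₀ := by
  classical
  have hex := exists_forall_pow_smul_ne hq hz
  obtain ⟨j, hj⟩ : ∃ j, Nat.find hex = j + 1 := by
    refine Nat.exists_eq_add_one.2 (Nat.pos_of_ne_zero fun h0 => ?_)
    exact Nat.find_spec hex z (by rw [h0, pow_zero, one_smul])
  obtain ⟨z₀, hz₀⟩ := not_forall_not.1 (Nat.find_min hex (by omega : j < Nat.find hex))
  refine ⟨j, z₀, hz₀.symm, fun z' hz' => Nat.find_spec hex z' ?_⟩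
  rw [hj, pow_succ, mul_smul, hz', hz₀]

theorem le_of_pow_smul_eq_pow_smul [IsAddTorsionFree L] (hq : q ≠ 0) {z₀ u : L}
    (hz₀ : ∀ z' : L, q • z' ≠ z₀) {i j : ℕ} (h : q ^ j • z₀ = q ^ i • u) : i ≤ j := by
  by_contra! hji
  obtain ⟨l, rfl⟩ := Nat.exists_eq_add_of_lt hji
  refine hz₀ (q ^ l • u) (nsmul_right_injective (pow_ne_zero j hq) ?_)
  change q ^ j • q • q ^ l • u = q ^ j • z₀
  rw [h, ← mul_smul, ← mul_smul]
  ring_nf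

end Lattice

section MonomialField

variable (k : Type*) [Field k] {L : Type*} [AddCommGroup L] (Λ : L →+ ℝ)

def monomialField : AddSubgroup (HahnSeries ℝ k) where
  carrier := {x | InMonomialField Λ x}
  zero_mem' := by simp [InMonomialField]
  add_mem' {x y} hx hy := ⟨(support_add_subset x y).trans (union_subset hx.1 hy.1), fun r =>
    ((hx.2 r).union (hy.2 r)).subset <| union_inter_distrib_right .. ▸
      inter_subset_inter_left _ (support_add_subset x y)⟩
  neg_mem' {x} hx := by simpa [InMonomialField] using hx

def supportedIn (S : Set ℝ) : AddSubgroup (HahnSeries ℝ k) where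
  carrier := {x | x.support ⊆ S}
  zero_mem' := by simp
  add_mem' {x y} hx hy := (support_add_subset x y).trans (union_subset hx hy)
  neg_mem' hx := by simpa using hx

def reducedExponents (q : ℕ) : Set ℝ := Λ '' {z | Λ z < 0 ∧ ∀ z', q • z' ≠ z}

variable {k Λ}

theorem mem_monomialField {x : HahnSeries ℝ k} :
    x ∈ monomialField k Λ ↔ InMonomialField Λ x := Iff.rfl

theorem supportedIn_mono {S T : Set ℝ} (h : S ⊆ T) : supportedIn k S ≤ supportedIn k T :=
  fun _ hx => hx.trans h

theorem mem_monomialField_of_support_subset {A : Set ℝ} (hA : A ⊆ range Λ)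
    (hA' : ∀ r, (A ∩ Iic r).Finite) {x : HahnSeries ℝ k} (hx : x.support ⊆ A) :
    x ∈ monomialField k Λ :=
  ⟨hx.trans hA, fun r => (hA' r).subset (inter_subset_inter_left _ hx)⟩

theorem single_mem_monomialField (z : L) (c : k) : single (Λ z) c ∈ monomialField k Λ :=
  mem_monomialField_of_support_subset (singleton_subset_iff.2 (mem_range_self z))
    (fun _ => (finite_singleton _).subset inter_subset_left) support_single_subset

theorem pow_expChar_pow_mem_monomialField {p : ℕ} [ExpChar k p] (f : ℕ) {x : HahnSeries ℝ k}
    (hx : x ∈ monomialField k Λ) : x ^ p ^ f ∈ monomialField k Λ := by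
  have hq : (0 : ℝ) < (p ^ f : ℕ) := by exact_mod_cast expChar_pow_pos k p f
  refine ⟨fun t ht => ?_, fun r => ?_⟩
  · obtain ⟨z, hz⟩ := hx.1 ((mem_support_pow_expChar_pow f hx.2).1 ht)
    exact ⟨p ^ f • z, by rw [map_nsmul, hz, nsmul_eq_mul, mul_div_cancel₀ _ hq.ne']⟩
  · refine ((hx.2 (r / (p ^ f : ℕ))).image fun t : ℝ => (p ^ f : ℕ) * t).subset ?_
    rintro t ⟨ht, htr⟩
    exact ⟨t / (p ^ f : ℕ), ⟨(mem_support_pow_expChar_pow f hx.2).1 ht,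
      div_le_div_of_nonneg_right htr hq.le⟩, mul_div_cancel₀ _ hq.ne'⟩

end MonomialField

section ArtinSchreierEquation

variable {k : Type*} [Field k] {p : ℕ} [ExpChar k p] {f : ℕ}

theorem artinSchreier_neg_hsum {G : SummableFamily ℝ k ℕ} (hG : ∀ n, G (n + 1) = G n ^ p ^ f)
    (hfin : ∀ n r, ((G n).support ∩ Iic r).Finite)
    (hfin' : ∀ r, (G.hsum.support ∩ Iic r).Finite) :
    artinSchreier _ p f (-G.hsum) = G 0 := by
  ext g
  obtain ⟨N, hN⟩ := (G.finite_co_support g).bddAbove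
  have hcoeff n : (G n).coeff (g / (p ^ f : ℕ)) ^ p ^ f = (G (n + 1)).coeff g := by
    rw [hG, coeff_pow_expChar_pow f (hfin n)]
  have hg : G.hsum.coeff g = ∑ n ∈ Finset.range (N + 1), (G n).coeff g :=
    SummableFamily.coeff_hsum_eq_sum_of_subset fun n hn =>
      Finset.mem_range.2 (Nat.lt_succ_of_le (hN hn))
  have hgq : G.hsum.coeff (g / (p ^ f : ℕ)) =
      ∑ n ∈ Finset.range N, (G n).coeff (g / (p ^ f : ℕ)) :=
    SummableFamily.coeff_hsum_eq_sum_of_subset fun n hn =>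
      Finset.mem_range.2 <| Nat.succ_le_iff.1 <|
        hN (show (G (n + 1)).coeff g ≠ 0 from hcoeff n ▸ pow_ne_zero _ hn)
  rw [map_neg, artinSchreier_apply, coeff_neg, coeff_sub, coeff_pow_expChar_pow f hfin', hg, hgq,
    sum_pow_char_pow, Finset.sum_range_succ']
  simp only [hcoeff]
  ring

variable {L : Type*} [AddCommGroup L] {Λ : L →+ ℝ}

theorem exists_artinSchreier_eq_of_pos (hq : 1 < p ^ f) {w : HahnSeries ℝ k}
    (hw : w ∈ monomialField k Λ) (hpos : ∀ s ∈ w.support, 0 < s) :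
    ∃ b ∈ monomialField k Λ, artinSchreier _ p f b = w := by
  obtain rfl | hw0 := eq_or_ne w 0
  · exact ⟨0, zero_mem _, map_zero _⟩
  have hδ : 0 < w.order := hpos _ (coeff_order_eq_zero.not.2 hw0)
  have hmem (n : ℕ) : w ^ (p ^ f) ^ n ∈ monomialField k Λ := by
    rw [← pow_mul]; exact pow_expChar_pow_mem_monomialField _ hw
  have hlow (n : ℕ) : ∀ t ∈ (w ^ (p ^ f) ^ n).support, w.order * n ≤ t := fun t ht => by
    have hn : (n : ℝ) ≤ ((p ^ f) ^ n : ℕ) := by exact_mod_cast (Nat.lt_pow_self hq).le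
    have := order_le_of_coeff_ne_zero ht
    rw [order_pow, nsmul_eq_mul] at this
    nlinarith
  have hfinN r : {n : ℕ | w.order * n ≤ r}.Finite :=
    (finite_Iic ⌊r / w.order⌋₊).subset fun n hn =>
      Nat.le_floor ((le_div_iff₀ hδ).2 (by rw [mul_comm]; exact hn))
  have hU r : ((⋃ n, (w ^ (p ^ f) ^ n).support) ∩ Iic r).Finite := by
    refine ((hfinN r).biUnion fun n _ => (hmem n).2 r).subset ?_
    rintro t ⟨ht, htr⟩
    obtain ⟨n, hn⟩ := mem_iUnion.1 ht
    exact mem_biUnion ((hlow n t hn).trans htr) ⟨hn, htr⟩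
  let G : SummableFamily ℝ k ℕ := ⟨fun n => w ^ (p ^ f) ^ n, IsPWO.of_finite_inter_Iic hU,
    fun g => (hfinN g).subset fun n hn => hlow n g hn⟩
  have hG : G.hsum ∈ monomialField k Λ :=
    mem_monomialField_of_support_subset (iUnion_subset fun n => (hmem n).1) hU
      SummableFamily.support_hsum_subset
  refine ⟨-G.hsum, neg_mem hG, ?_⟩
  simpa [G] using artinSchreier_neg_hsum (G := G) (fun n => by simp [G, pow_succ, pow_mul])
    (fun n => (hmem n).2) hG.2

end ArtinSchreierEquation

section Reduction

variable {k : Type*} [Field k] [IsAlgClosed k] {p : ℕ} [ExpChar k p] {f : ℕ}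
  {L : Type*} [AddCommGroup L] {Λ : L →+ ℝ}

theorem single_zero_mem_map_artinSchreier (hq : 1 < p ^ f) (c : k) :
    single 0 c ∈ (monomialField k Λ).map (artinSchreier _ p f) := by
  obtain ⟨d, rfl⟩ := IsAlgClosed.exists_artinSchreier_eq hq c
  refine ⟨single 0 d, by simpa using single_mem_monomialField (Λ := Λ) 0 d, ?_⟩
  simp [artinSchreier_apply, single_pow, single_sub]

theorem single_mem_supportedIn_sup_map_artinSchreier [Module.Free ℤ L] (hq : 1 < p ^ f) {z : L}
    (hz : Λ z < 0) (c : k) :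
    single (Λ z) c ∈ supportedIn k (reducedExponents Λ (p ^ f) ∩
      {t | ∃ j : ℕ, ((p ^ f) ^ j : ℕ) * t = Λ z}) ⊔
        (monomialField k Λ).map (artinSchreier _ p f) := by
  obtain ⟨j, z₀, rfl, hz₀⟩ :=
    exists_eq_pow_smul_of_ne_zero (z := z) hq (by rintro rfl; simp at hz)
  have hΛz : Λ ((p ^ f) ^ j • z₀) = ((p ^ f) ^ j : ℕ) * Λ z₀ := by rw [map_nsmul, nsmul_eq_mul]
  obtain ⟨d, rfl⟩ := IsAlgClosed.exists_pow_nat_eq c (pow_pos (expChar_pow_pos k p f) j)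
  set u := single (Λ z₀) d
  rw [show single (Λ ((p ^ f) ^ j • z₀)) (d ^ (p ^ f) ^ j) = u ^ (p ^ f) ^ j by
      rw [single_pow, map_nsmul],
    ← sub_add_cancel (u ^ (p ^ f) ^ j) u, pow_pow_sub_self_eq_artinSchreier_sum]
  refine add_mem (AddSubgroup.mem_sup_right ⟨_, sum_mem fun i _ => ?_, rfl⟩)
    (AddSubgroup.mem_sup_left (support_single_subset.trans (singleton_subset_iff.2 ?_)))
  · rw [← pow_mul]
    exact pow_expChar_pow_mem_monomialField _ (single_mem_monomialField z₀ d)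
  · refine ⟨⟨z₀, ⟨neg_of_mul_neg_right (hΛz ▸ hz) (Nat.cast_nonneg _), hz₀⟩, rfl⟩, j, hΛz.symm⟩

theorem mem_supportedIn_sup_map_artinSchreier [Module.Free ℤ L] (hq : 1 < p ^ f)
    {w : HahnSeries ℝ k} (hw : w ∈ monomialField k Λ) :
    w ∈ supportedIn k (reducedExponents Λ (p ^ f) ∩
      {t | ∃ j : ℕ, ((p ^ f) ^ j : ℕ) * t ∈ w.support}) ⊔
        (monomialField k Λ).map (artinSchreier _ p f) := by
  have hneg : (truncLT 0 w).support ⊆ w.support ∩ Iio 0 := by rw [support_truncLT]; rfl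
  have hfin : (truncLT 0 w).support.Finite :=
    (hw.2 0).subset (hneg.trans (inter_subset_inter_right _ Iio_subset_Iic_self))
  set wpos := w - truncLT 0 w - single 0 (w.coeff 0)
  have hwpos : ∀ s ∈ wpos.support, 0 < s := fun s hs => by
    by_contra! hs0
    obtain hs0 | rfl := hs0.lt_or_eq
    · exact hs (by simp [wpos, hs0, hs0.ne])
    · exact hs (by simp [wpos])
  have hwpos_mem : wpos ∈ monomialField k Λ :=
    sub_mem (sub_mem hw (mem_monomialField_of_support_subset hw.1 hw.2
      (support_truncLT_subset 0 w))) (by simpa using single_mem_monomialField (Λ := Λ) 0 _)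
  set T := w.support -- so that rewriting `w` below leaves the support condition alone
  rw [← sub_add_cancel w wpos, ← sub_add_cancel (w - wpos) (single 0 (w.coeff 0))]
  refine add_mem (add_mem ?_ ?_) ?_
  · rw [show w - wpos - single 0 (w.coeff 0) = truncLT 0 w by simp only [wpos]; abel,
      ← sum_single_coeff_of_support_finite hfin]
    refine sum_mem fun s hs => ?_
    obtain ⟨hsw, hs0⟩ := hneg (hfin.mem_toFinset.1 hs)
    obtain ⟨z, rfl⟩ := hw.1 hsw
    refine sup_le_sup_right (supportedIn_mono ?_) _
      (single_mem_supportedIn_sup_map_artinSchreier hq hs0 _)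
    exact inter_subset_inter_right _ fun t ⟨j, hj⟩ => ⟨j, hj ▸ hsw⟩
  · exact AddSubgroup.mem_sup_right (single_zero_mem_map_artinSchreier hq _)
  · obtain ⟨b, hb, hbw⟩ := exists_artinSchreier_eq_of_pos hq hwpos_mem hwpos
    exact AddSubgroup.mem_sup_right ⟨b, hb, hbw⟩

end Reduction

section Uniqueness

variable {k : Type*} [Field k] {p : ℕ} [ExpChar k p] {f : ℕ} {L : Type*} [AddCommGroup L]
  {Λ : L →+ ℝ}

theorem disjoint_supportedIn_reducedExponents_map_artinSchreier (hq : 1 < p ^ f)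
    (hΛ : Function.Injective Λ) :
    Disjoint (supportedIn k (reducedExponents Λ (p ^ f)))
      ((monomialField k Λ).map (artinSchreier _ p f)) := by
  rw [AddSubgroup.disjoint_def]
  rintro _ hD ⟨u, hu, rfl⟩
  have hcoeff t : (artinSchreier _ p f u).coeff t =
      u.coeff (t / (p ^ f : ℕ)) ^ p ^ f - u.coeff t := by
    rw [artinSchreier_apply, coeff_sub, coeff_pow_expChar_pow f hu.2]
  by_contra hne
  have hu0 : u.order ∈ u.support :=
    coeff_order_eq_zero.not.2 fun hu0 => hne (by rw [hu0, map_zero])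
  obtain hord | hord := lt_or_ge u.order 0
  · have hq' : (1 : ℝ) < (p ^ f : ℕ) := by exact_mod_cast hq
    have hmem : (p ^ f : ℕ) * u.order ∈ (artinSchreier _ p f u).support := by
      rw [mem_support, hcoeff, mul_div_cancel_left₀ _ (by positivity),
        coeff_eq_zero_of_lt_order (i := (p ^ f : ℕ) * u.order) (by nlinarith), sub_zero]
      exact pow_ne_zero _ hu0
    obtain ⟨z', ⟨-, hz'⟩, hz'u⟩ := hD hmem
    obtain ⟨z, hz⟩ := hu.1 hu0
    exact hz' z (hΛ (by rw [map_nsmul, hz, nsmul_eq_mul, hz'u]))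
  · obtain ⟨t, ht⟩ := support_nonempty_iff.2 hne
    obtain ⟨z', ⟨htneg, -⟩, rfl⟩ := hD ht
    have hq' : (0 : ℝ) < (p ^ f : ℕ) := by positivity
    refine ht ?_
    rw [hcoeff, coeff_eq_zero_of_lt_order (htneg.trans_le hord),
      coeff_eq_zero_of_lt_order ((div_neg_of_neg_of_pos htneg hq').trans_le hord),
      zero_pow (expChar_pow_pos k p f).ne', sub_zero]

end Uniqueness

theorem stmt_5_general (p : ℕ) [Fact p.Prime] {k : Type*} [Field k] [IsAlgClosed k]
    [CharP k p] (f q : ℕ) (hf : 0 < f) (hq : q = p ^ f)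
    {L : Type*} [AddCommGroup L] [Module.Free ℤ L]
    (Λ : L →+ ℝ) (hΛ : Function.Injective Λ)
    (x : HahnSeries ℝ k) (hx : InMonomialField Λ x)
    (hnot : ¬ ∃ a : HahnSeries ℝ k, InMonomialField Λ a ∧ a ^ q - a = x) :
    ∃ c : ℝ, 0 < c ∧ ∀ (i : ℕ) (y : HahnSeries ℝ k), InMonomialField Λ y →
      (x - y + y ^ q).support ⊆ Set.range (fun z : L => (q ^ i : ℕ) • Λ z) →
      (x - y + y ^ q).orderTop ≤ ((-(c * (q : ℝ) ^ i) : ℝ) : WithTop ℝ) := by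
  subst hq
  have hq : 1 < p ^ f := Nat.one_lt_pow hf.ne' (Fact.out : p.Prime).one_lt
  have := hΛ.isAddTorsionFree
  obtain ⟨N, hN, _, ⟨b, hb, rfl⟩, hxN⟩ :=
    AddSubgroup.mem_sup.1 <|
      mem_supportedIn_sup_map_artinSchreier (k := k) (Λ := Λ) hq (mem_monomialField.2 hx)
  have hN0 : N.order ∈ N.support := coeff_order_eq_zero.not.2 fun h =>
    hnot ⟨b, hb, by rw [← hxN, h, zero_add, artinSchreier_apply]⟩
  obtain ⟨⟨m, ⟨hm0, hm⟩, hmN⟩, -⟩ := hN hN0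
  refine ⟨-Λ m, neg_pos.2 hm0, fun i y hy hw => ?_⟩
  obtain ⟨N', hN', _, ⟨b', hb', rfl⟩, hwN'⟩ := AddSubgroup.mem_sup.1
    (mem_supportedIn_sup_map_artinSchreier (k := k) (Λ := Λ) hq
      (add_mem (sub_mem (mem_monomialField.2 hx) (mem_monomialField.2 hy))
        (pow_expChar_pow_mem_monomialField (p := p) f (mem_monomialField.2 hy))))
  have hNN' : N' = N := by
    refine sub_eq_zero.1 <| AddSubgroup.disjoint_def.1
      (disjoint_supportedIn_reducedExponents_map_artinSchreier hq hΛ)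
      (sub_mem (supportedIn_mono inter_subset_left hN') (supportedIn_mono inter_subset_left hN))
      ⟨y + b - b', sub_mem (add_mem (mem_monomialField.2 hy) hb) hb', ?_⟩
    simp only [map_sub, map_add, artinSchreier_apply] at hxN hwN' ⊢
    linear_combination hxN - hwN'
  rw [hNN'] at hN'
  obtain ⟨-, j, hj⟩ := hN' hN0
  rw [← hmN] at hj
  obtain ⟨u, hu⟩ := hw hj
  have hij : i ≤ j := le_of_pow_smul_eq_pow_smul (pow_pos (Fact.out : p.Prime).pos f).ne' hm
    (hΛ (by rw [map_nsmul, map_nsmul, nsmul_eq_mul, ← hu]))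
  calc _ ≤ ((((p ^ f) ^ j : ℕ) * Λ m : ℝ) : WithTop ℝ) := orderTop_le_of_coeff_ne_zero hj
    _ ≤ _ := by
      refine WithTop.coe_le_coe.2 ?_
      have := pow_le_pow_right₀ (by exact_mod_cast hq.le : (1 : ℝ) ≤ (p ^ f : ℕ)) hij
      push_cast at this ⊢
      nlinarith

/-- Positioning lemma: in the monomial field `E = k((L))_λ` over an algebraically
closed field `k` of characteristic `p > 0` (`q` a power of `p`), if `x ∈ E` cannot
be written as `a^q − a`, then there is `c > 0` such that for every `i ≥ 0` and
every `y ∈ E` with `x − y + y^q` supported on `q^i·L`, one has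
`v_λ(x − y + y^q) ≤ −c·q^i`. -/
theorem stmt_5 (p : ℕ) [Fact p.Prime] {k : Type*} [Field k] [IsAlgClosed k]
    [CharP k p] (f q : ℕ) (hf : 0 < f) (hq : q = p ^ f)
    {L : Type*} [AddCommGroup L] [Module.Free ℤ L] [Module.Finite ℤ L]
    (Λ : L →+ ℝ) (hΛ : Function.Injective Λ)
    (x : HahnSeries ℝ k) (hx : InMonomialField Λ x)
    (hnot : ¬ ∃ a : HahnSeries ℝ k, InMonomialField Λ a ∧ a ^ q - a = x) :
    ∃ c : ℝ, 0 < c ∧ ∀ (i : ℕ) (y : HahnSeries ℝ k), InMonomialField Λ y →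
      (x - y + y ^ q).support ⊆ Set.range (fun z : L => (q ^ i : ℕ) • Λ z) →
      (x - y + y ^ q).orderTop ≤ ((-(c * (q : ℝ) ^ i) : ℝ) : WithTop ℝ) :=
  stmt_5_general p f q hf hq Λ hΛ x hx hnot
end

section
/- Let w denote the normalized p-adic valuation on ℤ (so w(p) = 1). For every nonnegative integer j and positive integer h, we have w(j!) − ⌊j/p^h⌋ · w((p^h)!) − w((j − p^h·⌊j/p^h⌋)!) ≤ j/(p^h·(p−1)). -/
/-!
By Legendre's formula `(p - 1) · w(n!) = n - s(n)`, where `s` is the base-`p` digit sum. Writing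
`j = p^h q + r` with `r < p^h`, the digits of `j` are those of `r`, padded with zeros, followed by
those of `q`, so `s(j) = s(r) + s(q)`; also `s(p^h) = 1`. Hence the left-hand side is exactly
`w(q!) = (q - s(q))/(p - 1) ≤ q/(p - 1) ≤ j/(p^h (p - 1))`.
-/

open scoped Nat

namespace Nat

theorem digits_sum_add_base_pow_mul {b h q r : ℕ} (hb : 1 < b) (hr : r < b ^ h) :
    (b.digits (r + b ^ h * q)).sum = (b.digits r).sum + (b.digits q).sum := by
  rcases q.eq_zero_or_pos with rfl | hq
  · simp
  have hlen : (b.digits r).length ≤ h := (digits_length_le_iff hb r).2 hr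
  rw [← Nat.add_sub_cancel' hlen, ← digits_append_zeroes_append_digits hb hq]
  simp

theorem digits_sum_base_pow {b : ℕ} (hb : 1 < b) (h : ℕ) : (b.digits (b ^ h)).sum = 1 := by
  simpa [digits_of_lt b 1 one_ne_zero hb] using
    congrArg List.sum (digits_base_pow_mul (k := h) hb one_pos)

end Nat

section

variable {p : ℕ} [Fact p.Prime]

theorem sub_one_mul_padicValNat_factorial_add_digits_sum (n : ℕ) :
    (p - 1) * padicValNat p n ! + (p.digits n).sum = n := by
  rw [sub_one_mul_padicValNat_factorial, Nat.sub_add_cancel (Nat.digit_sum_le p n)]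

theorem padicValNat_factorial_add_pow_mul {h q r : ℕ} (hr : r < p ^ h) :
    padicValNat p (r + p ^ h * q)! =
      q * padicValNat p (p ^ h)! + padicValNat p r ! + padicValNat p q ! := by
  have hp : 1 < p := Fact.out (p := p.Prime) |>.one_lt
  refine Nat.eq_of_mul_eq_mul_left (Nat.sub_pos_of_lt hp) ?_
  have hj := sub_one_mul_padicValNat_factorial_add_digits_sum (p := p) (r + p ^ h * q)
  have hph := sub_one_mul_padicValNat_factorial_add_digits_sum (p := p) (p ^ h)
  have hr' := sub_one_mul_padicValNat_factorial_add_digits_sum (p := p) r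
  have hq := sub_one_mul_padicValNat_factorial_add_digits_sum (p := p) q
  rw [Nat.digits_sum_add_base_pow_mul hp hr] at hj
  rw [Nat.digits_sum_base_pow hp] at hph
  linear_combination hj - q * hph - hr' - hq

end

theorem stmt_6_general (p : ℕ) [Fact p.Prime] (h j : ℕ) :
    (padicValNat p (Nat.factorial j) : ℝ)
      - (j / p ^ h : ℕ) * (padicValNat p (Nat.factorial (p ^ h)) : ℝ)
      - (padicValNat p (Nat.factorial (j - p ^ h * (j / p ^ h))) : ℝ)
      ≤ (j : ℝ) / ((p : ℝ) ^ h * ((p : ℝ) - 1)) := by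
  set q := j / p ^ h
  have hp : 1 < p := Fact.out (p := p.Prime) |>.one_lt
  have hr : j - p ^ h * q < p ^ h := by
    rw [← Nat.mod_def]; exact Nat.mod_lt _ (by positivity)
  have hj : j = (j - p ^ h * q) + p ^ h * q := (Nat.sub_add_cancel (Nat.mul_div_le j _)).symm
  have hlhs : (padicValNat p j ! : ℝ) - q * padicValNat p (p ^ h)! - padicValNat p (j - p ^ h * q)!
      = padicValNat p q ! := by
    rw [hj, padicValNat_factorial_add_pow_mul hr, ← hj]; push_cast; ring
  have hq : ((p : ℝ) - 1) * padicValNat p q ! ≤ q := by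
    have := (sub_one_mul_padicValNat_factorial (p := p) q).trans_le (Nat.sub_le _ _)
    rwa [← Nat.cast_le (α := ℝ), Nat.cast_mul, Nat.cast_sub hp.le, Nat.cast_one] at this
  have hqj : (q : ℝ) ≤ j / (p : ℝ) ^ h := by exact_mod_cast Nat.cast_div_le (α := ℝ)
  have hp1 : (0 : ℝ) < p - 1 := by simpa using (Nat.one_lt_cast (α := ℝ)).2 hp
  rw [hlhs, ← div_div, le_div_iff₀ hp1, mul_comm]
  exact hq.trans hqj

/-- For `w` the normalized `p`-adic valuation, `j ≥ 0` and `h ≥ 1`: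
`w(j!) − ⌊j/p^h⌋·w((p^h)!) − w((j − p^h·⌊j/p^h⌋)!) ≤ j/(p^h·(p−1))`. -/
theorem stmt_6 (p : ℕ) [Fact p.Prime] (h j : ℕ) (hh : 1 ≤ h) :
    (padicValNat p (Nat.factorial j) : ℝ)
      - (j / p ^ h : ℕ) * (padicValNat p (Nat.factorial (p ^ h)) : ℝ)
      - (padicValNat p (Nat.factorial (j - p ^ h * (j / p ^ h))) : ℝ)
      ≤ (j : ℝ) / ((p : ℝ) ^ h * ((p : ℝ) - 1)) :=
  stmt_6_general p h j
end
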